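/- arXiv:1401.0259 — 5 statements merged into one kernel-verified Lean document; each statement's English description precedes it below -/
import Mathlib

section
/- Let F_α(z) = z(1-αz)/(1-z²) for α ∈ [-1,1]. Then Re[(1-z²)·F_α'(z)] > 0 for all z in the open unit disk. -/
/-!
Since $(1-z^2)F_α'(z) = (1+z^2-2αz)/(1-z^2)$ and
$1+z^2-2αz = \tfrac{1+α}{2}(1-z)^2 + \tfrac{1-α}{2}(1+z)^2$, the quantity is the convex combination
$\tfrac{1+α}{2}\,\tfrac{1-z}{1+z} + \tfrac{1-α}{2}\,\tfrac{1+z}{1-z}$ of two Cayley transforms,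
each of which maps the unit disk into the right half-plane.
-/

open Complex

theorem one_sub_ne_zero_of_norm_lt_one {R : Type*} [NormedRing R] [NormOneClass R] {z : R}
    (hz : ‖z‖ < 1) : 1 - z ≠ 0 := by
  rw [sub_ne_zero]
  rintro rfl
  simp at hz

theorem re_one_add_div_one_sub_pos {z : ℂ} (hz : ‖z‖ < 1) : 0 < ((1 + z) / (1 - z)).re := by
  have hre : ((1 + z) / (1 - z)).re = (1 - normSq z) / normSq (1 - z) := by
    rw [div_re, ← add_div]
    congr 1
    simp only [add_re, add_im, sub_re, sub_im, one_re, one_im, normSq_apply]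
    ring
  have hnormSq : normSq z < 1 := by
    rw [normSq_eq_norm_sq]
    nlinarith [norm_nonneg z]
  rw [hre]
  exact div_pos (by linarith) (normSq_pos.2 (one_sub_ne_zero_of_norm_lt_one hz))

theorem re_ofReal_mul_add_ofReal_mul_pos {s t : ℝ} {w₁ w₂ : ℂ} (hs : 0 ≤ s) (ht : 0 ≤ t)
    (hst : 0 < s + t) (hw₁ : 0 < w₁.re) (hw₂ : 0 < w₂.re) : 0 < (s * w₁ + t * w₂).re := by
  rw [add_re, re_ofReal_mul, re_ofReal_mul]
  rcases hs.eq_or_lt with rfl | hs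
  · simp only [zero_mul, zero_add] at hst ⊢
    positivity
  · have := mul_nonneg ht hw₂.le
    positivity

theorem hasDerivAt_mul_one_sub_div_one_sub_sq {𝕜 : Type*} [NontriviallyNormedField 𝕜]
    (a z : 𝕜) (hz : 1 - z ^ 2 ≠ 0) :
    HasDerivAt (fun w : 𝕜 => w * (1 - a * w) / (1 - w ^ 2))
      ((1 + z ^ 2 - 2 * a * z) / (1 - z ^ 2) ^ 2) z := by
  have hnum : HasDerivAt (fun w : 𝕜 => w * (1 - a * w)) (1 - 2 * a * z) z :=
    ((hasDerivAt_id' z).mul (((hasDerivAt_id' z).const_mul a).const_sub 1)).congr_deriv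
      (by ring)
  have hden : HasDerivAt (fun w : 𝕜 => 1 - w ^ 2) (-(2 * z)) z :=
    ((hasDerivAt_pow 2 z).const_sub 1).congr_deriv (by push_cast; ring)
  exact (hnum.div hden hz).congr_deriv (by ring)

theorem div_one_sub_sq_eq_convex_comb (α : ℝ) {z : ℂ} (h₁ : 1 - z ≠ 0) (h₂ : 1 + z ≠ 0) :
    (1 + z ^ 2 - 2 * α * z) / (1 - z ^ 2) =
      (((1 + α) / 2 : ℝ) : ℂ) * ((1 - z) / (1 + z)) +
        (((1 - α) / 2 : ℝ) : ℂ) * ((1 + z) / (1 - z)) := by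
  rw [show 1 - z ^ 2 = (1 - z) * (1 + z) by ring]
  push_cast
  field_simp
  ring

theorem stmt_1 (α : ℝ) (hα : α ∈ Set.Icc (-1 : ℝ) 1) (z : ℂ) (hz : ‖z‖ < 1) :
    0 < ((1 - z ^ 2) *
      deriv (fun w : ℂ => w * (1 - (α : ℂ) * w) / (1 - w ^ 2)) z).re := by
  have hneg : ‖-z‖ < 1 := by rwa [norm_neg]
  have h₁ : 1 - z ≠ 0 := one_sub_ne_zero_of_norm_lt_one hz
  have h₂ : 1 + z ≠ 0 := by simpa using one_sub_ne_zero_of_norm_lt_one hneg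
  have hz2 : 1 - z ^ 2 ≠ 0 := by
    rw [show 1 - z ^ 2 = (1 - z) * (1 + z) by ring]
    exact mul_ne_zero h₁ h₂
  have hcayley_neg : 0 < ((1 - z) / (1 + z)).re := by
    simpa [sub_eq_add_neg] using re_one_add_div_one_sub_pos hneg
  rw [(hasDerivAt_mul_one_sub_div_one_sub_sq _ z hz2).deriv,
    show (1 - z ^ 2) * ((1 + z ^ 2 - 2 * α * z) / (1 - z ^ 2) ^ 2)
      = (1 + z ^ 2 - 2 * α * z) / (1 - z ^ 2) by field_simp,
    div_one_sub_sq_eq_convex_comb α h₁ h₂]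
  exact re_ofReal_mul_add_ofReal_mul_pos (by linarith [hα.1]) (by linarith [hα.2])
    (by linarith) hcayley_neg (re_one_add_div_one_sub_pos hz)
end

section
/- For θ ∈ (0,π), let F_θ(z) = (1/(2i sin θ)) log((1+ze^{iθ})/(1+ze^{-iθ})) on the unit disk. Then (1-z²)·F_θ'(z) = (1-z²)/((1+ze^{iθ})(1+ze^{-iθ})), and this function has positive real part for every z in the open unit disk. -/
/-!
Write `u = 1 + z e^{iθ}` and `v = 1 + z e^{-iθ}`. Differentiating `exp (2 i sin θ · F) = u / v`
gives `2 i sin θ · F' · u / v = (e^{iθ} - e^{-iθ}) / v²`, and `e^{iθ} - e^{-iθ} = 2 i sin θ`, so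
`F' = 1 / (u v)`. Moreover `u v = 1 + 2 c z + z²` with `c = cos θ`, and for `z = x + i y`
`Re ((1 - z²) · conj (1 + 2 c z + z²)) = (1 - |z|²) ((x + c)² + y² + 1 - c²)`,
which is positive since `|z| < 1` and `c² < 1`.
-/

open Complex Metric Filter Topology ComplexConjugate

theorem deriv_eq_of_exp_mul_eventuallyEq {F g : ℂ → ℂ} {a g' z : ℂ} (ha : a ≠ 0)
    (hF : DifferentiableAt ℂ F z) (hg : HasDerivAt g g' z)
    (h : ∀ᶠ w in 𝓝 z, exp (a * F w) = g w) :
    deriv F z = g' / (a * g z) := by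
  have hexp : HasDerivAt g (exp (a * F z) * (a * deriv F z)) z :=
    (hF.hasDerivAt.const_mul a).cexp.congr_of_eventuallyEq (h.mono fun _ hw => hw.symm)
  rw [hg.unique hexp, ← h.self_of_nhds]
  field_simp [exp_ne_zero]

theorem hasDerivAt_one_add_mul_div_one_add_mul {b c z : ℂ} (hz : 1 + z * c ≠ 0) :
    HasDerivAt (fun w => (1 + w * b) / (1 + w * c)) ((b - c) / (1 + z * c) ^ 2) z := by
  have hb := ((hasDerivAt_id' z).mul_const b).const_add 1
  have hc := ((hasDerivAt_id' z).mul_const c).const_add 1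
  exact (hb.div hc hz).congr_deriv (by ring)

theorem exp_mul_I_sub_exp_neg_mul_I (θ : ℝ) :
    exp (I * θ) - exp (-(I * θ)) = 2 * I * (Real.sin θ : ℂ) := by
  rw [ofReal_sin, mul_right_comm, two_sin, mul_comm I, neg_mul]
  linear_combination (exp (θ * I) - exp (-(θ * I))) * I_sq

theorem one_add_mul_exp_mul_one_add_mul_exp_neg (θ : ℝ) (z : ℂ) :
    (1 + z * exp (I * θ)) * (1 + z * exp (-(I * θ))) = 1 + 2 * (Real.cos θ : ℂ) * z + z ^ 2 := by
  have h : exp (I * θ) * exp (-(I * θ)) = 1 := by rw [← exp_add, add_neg_cancel, exp_zero]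
  rw [ofReal_cos, two_cos, neg_mul, mul_comm (θ : ℂ) I]
  linear_combination z ^ 2 * h

theorem re_one_sub_sq_mul_conj_one_add_two_mul_add_sq_pos {c : ℝ} (hc : c ^ 2 < 1) {z : ℂ}
    (hz : ‖z‖ < 1) : 0 < ((1 - z ^ 2) * conj (1 + 2 * c * z + z ^ 2)).re := by
  have hxy : z.re ^ 2 + z.im ^ 2 < 1 := by
    have : ‖z‖ ^ 2 < 1 := by nlinarith [norm_nonneg z]
    rwa [Complex.sq_norm, normSq_apply, ← sq, ← sq] at this
  have key : ((1 - z ^ 2) * conj (1 + 2 * c * z + z ^ 2)).re =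
      (1 - (z.re ^ 2 + z.im ^ 2)) * ((z.re + c) ^ 2 + z.im ^ 2 + (1 - c ^ 2)) := by
    simp only [pow_two, map_add, map_one, map_mul, conj_ofReal, mul_re, sub_re, one_re, add_re,
      conj_re, re_ofNat, ofReal_re, conj_im, im_ofNat, neg_zero, ofReal_im, mul_zero, sub_zero,
      mul_im, zero_mul, add_zero, mul_neg, neg_mul, neg_neg, sub_im, one_im, zero_sub, neg_add_rev,
      add_im, zero_add]
    ring
  rw [key]
  apply mul_pos <;> nlinarith [sq_nonneg (z.re + c), sq_nonneg z.im]

theorem re_one_sub_sq_div_one_add_two_mul_add_sq_pos {c : ℝ} (hc : c ^ 2 < 1) {z : ℂ}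
    (hz : ‖z‖ < 1) : 0 < ((1 - z ^ 2) / (1 + 2 * c * z + z ^ 2)).re := by
  have h := re_one_sub_sq_mul_conj_one_add_two_mul_add_sq_pos hc hz
  have hq : 1 + 2 * c * z + z ^ 2 ≠ 0 := by
    rintro hq
    simp [hq] at h
  rw [div_eq_mul_inv, inv_def, ← mul_assoc, re_mul_ofReal]
  exact mul_pos h (inv_pos.2 (normSq_pos.2 hq))

theorem stmt_2_general (θ : ℝ) (hθ : θ ∈ Set.Ioo 0 Real.pi) (F : ℂ → ℂ)
    (hF : DifferentiableOn ℂ F (ball (0 : ℂ) 1))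
    (hbranch : ∀ z ∈ ball (0 : ℂ) 1,
      Complex.exp ((2 * Complex.I * (Real.sin θ : ℂ)) * F z) =
        (1 + z * Complex.exp (Complex.I * θ)) / (1 + z * Complex.exp (-(Complex.I * θ))))
    (z : ℂ) (hz : z ∈ ball (0 : ℂ) 1) :
    (1 - z ^ 2) * deriv F z =
      (1 - z ^ 2) /
        ((1 + z * Complex.exp (Complex.I * θ)) * (1 + z * Complex.exp (-(Complex.I * θ)))) ∧
    0 < ((1 - z ^ 2) /
        ((1 + z * Complex.exp (Complex.I * θ)) * (1 + z * Complex.exp (-(Complex.I * θ))))).re := by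
  have hsin : Real.sin θ ≠ 0 := (Real.sin_pos_of_pos_of_lt_pi hθ.1 hθ.2).ne'
  have hcos : Real.cos θ ^ 2 < 1 := by
    nlinarith [Real.sin_sq_add_cos_sq θ, sq_pos_of_ne_zero hsin]
  have hpos := re_one_sub_sq_div_one_add_two_mul_add_sq_pos hcos (mem_ball_zero_iff.1 hz)
  rw [← one_add_mul_exp_mul_one_add_mul_exp_neg] at hpos
  have huv : (1 + z * exp (I * θ)) * (1 + z * exp (-(I * θ))) ≠ 0 := fun h => by
    simp [h] at hpos
  obtain ⟨-, hv⟩ := mul_ne_zero_iff.1 huv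
  have hsin' : (Real.sin θ : ℂ) ≠ 0 := ofReal_ne_zero.2 hsin
  have ha : 2 * I * (Real.sin θ : ℂ) ≠ 0 := mul_ne_zero (mul_ne_zero two_ne_zero I_ne_zero) hsin'
  have hnhds := isOpen_ball.mem_nhds hz
  have hderiv : deriv F z = 1 / ((1 + z * exp (I * θ)) * (1 + z * exp (-(I * θ)))) := by
    rw [deriv_eq_of_exp_mul_eventuallyEq ha (hF.differentiableAt hnhds)
      (hasDerivAt_one_add_mul_div_one_add_mul hv) (eventually_of_mem hnhds hbranch),
      exp_mul_I_sub_exp_neg_mul_I]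
    field_simp
  exact ⟨by rw [hderiv, mul_one_div], hpos⟩

theorem stmt_2 (θ : ℝ) (hθ : θ ∈ Set.Ioo 0 Real.pi) (F : ℂ → ℂ)
    (hF : DifferentiableOn ℂ F (ball (0 : ℂ) 1)) (hF0 : F 0 = 0)
    (hbranch : ∀ z ∈ ball (0 : ℂ) 1,
      Complex.exp ((2 * Complex.I * (Real.sin θ : ℂ)) * F z) =
        (1 + z * Complex.exp (Complex.I * θ)) / (1 + z * Complex.exp (-(Complex.I * θ))))
    (z : ℂ) (hz : z ∈ ball (0 : ℂ) 1) :
    (1 - z ^ 2) * deriv F z =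
      (1 - z ^ 2) /
        ((1 + z * Complex.exp (Complex.I * θ)) * (1 + z * Complex.exp (-(Complex.I * θ)))) ∧
    0 < ((1 - z ^ 2) /
        ((1 + z * Complex.exp (Complex.I * θ)) * (1 + z * Complex.exp (-(Complex.I * θ))))).re :=
  stmt_2_general θ hθ F hF hbranch z hz
end

section
/- For every z in the open unit disk and every θ ∈ (0,π), Re[(1-z²)/((1+ze^{iθ})(1+ze^{-iθ}))] > 0. -/
/-!
Writing `w = exp (iθ)`, so that `z² = (z w) (z w̄)`, the function splits as
`(1 - z²) / ((1 + z w) (1 + z w̄)) = ((1 - z w) / (1 + z w) + (1 - z w̄) / (1 + z w̄)) / 2`.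
Each summand is the Cayley transform `(1 - u) / (1 + u)` of a point `u` of the open unit disk,
whose real part `(1 - |u|²) / |1 + u|²` is positive.
-/

open Complex

lemma Complex.one_add_ne_zero_of_norm_lt_one {u : ℂ} (hu : ‖u‖ < 1) : 1 + u ≠ 0 := by
  intro h
  rw [eq_neg_of_add_eq_zero_right h, norm_neg, norm_one] at hu
  exact lt_irrefl 1 hu

lemma Complex.re_one_sub_div_one_add_pos {u : ℂ} (hu : ‖u‖ < 1) : 0 < ((1 - u) / (1 + u)).re := by
  have hden : 0 < normSq (1 + u) := normSq_pos.mpr (one_add_ne_zero_of_norm_lt_one hu)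
  have hnum : 0 < 1 - normSq u := by
    rw [normSq_eq_norm_sq]
    nlinarith [norm_nonneg u]
  rw [div_re, ← add_div]
  apply div_pos _ hden
  simp only [sub_re, sub_im, add_re, add_im, one_re, one_im, normSq_apply] at hnum ⊢
  linarith

lemma one_sub_mul_div_eq_half_add {K : Type*} [Field K] [NeZero (2 : K)] {u v : K}
    (hu : 1 + u ≠ 0) (hv : 1 + v ≠ 0) :
    (1 - u * v) / ((1 + u) * (1 + v)) = ((1 - u) / (1 + u) + (1 - v) / (1 + v)) / 2 := by
  field_simp
  ring

theorem stmt_3_general (θ : ℝ) (z : ℂ) (hz : ‖z‖ < 1) :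
    0 < ((1 - z ^ 2) /
      ((1 + z * Complex.exp (Complex.I * θ)) * (1 + z * Complex.exp (-(Complex.I * θ))))).re := by
  have norm_mul_exp_lt : ∀ t : ℂ, t.re = 0 → ‖z * exp t‖ < 1 := fun t ht => by
    rwa [norm_mul, norm_exp, ht, Real.exp_zero, mul_one]
  have hu := norm_mul_exp_lt (I * θ) (by simp)
  have hv := norm_mul_exp_lt (-(I * θ)) (by simp)
  have hz2 : z ^ 2 = z * exp (I * θ) * (z * exp (-(I * θ))) := by
    rw [mul_mul_mul_comm, ← exp_add, add_neg_cancel, exp_zero, mul_one, sq]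
  rw [hz2, one_sub_mul_div_eq_half_add (one_add_ne_zero_of_norm_lt_one hu)
    (one_add_ne_zero_of_norm_lt_one hv), div_ofNat_re, add_re]
  exact half_pos (add_pos (re_one_sub_div_one_add_pos hu) (re_one_sub_div_one_add_pos hv))

theorem stmt_3 (θ : ℝ) (hθ : θ ∈ Set.Ioo 0 Real.pi) (z : ℂ) (hz : ‖z‖ < 1) :
    0 < ((1 - z ^ 2) /
      ((1 + z * Complex.exp (Complex.I * θ)) * (1 + z * Complex.exp (-(Complex.I * θ))))).re :=
  stmt_3_general θ z hz
end

section
/- Let f be holomorphic and nonconstant on the open unit disk E with Re[(1-z²)f'(z)] ≥ 0 for all z ∈ E. Then f is injective on E. -/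
/-!
Write `h z = (1 - z²) f'(z)`. Since `Re h ≥ 0` on the disc, the open mapping theorem makes `h`
either constant or of strictly positive real part; as `f` is not constant, in both cases some
rotation `u h` has positive real part. The map `T ζ = tanh (ζ / 2)` sends the convex strip
`|Im ζ| < π / 2` onto the disc with `T' = (1 - T²) / 2`, so `(f ∘ T)' = (h ∘ T) / 2`. A function
on a convex set whose derivative lies in an open half-plane is injective (Noshiro–Warschawski:
by Rolle's theorem applied to the real part of its rotated restriction to a segment), hence
`f ∘ T` is injective on the strip and `f` on the disc.
-/

open Complex Metric Set
open scoped Real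

theorem Convex.injOn_of_hasDerivAt_of_re_mul_pos {U : Set ℂ} (hU : Convex ℝ U) {g g' : ℂ → ℂ}
    (u : ℂ) (hg : ∀ z ∈ U, HasDerivAt g (g' z) z) (hpos : ∀ z ∈ U, 0 < (u * g' z).re) :
    InjOn g U := by
  intro a ha b hb hab
  by_contra hne
  have hba : b - a ≠ 0 := sub_ne_zero.mpr (Ne.symm hne)
  set γ : ℂ → ℂ := fun s => a + s * (b - a)
  have hγ : ∀ t ∈ Icc (0 : ℝ) 1, γ t ∈ U := fun t ⟨ht0, ht1⟩ => by
    simpa [γ, smul_eq_mul, mul_comm] using hU.add_smul_sub_mem ha hb ⟨ht0, ht1⟩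
  have hderiv : ∀ t ∈ Icc (0 : ℝ) 1, HasDerivAt (fun t : ℝ => (u * g (γ t) / (b - a)).re)
      (u * g' (γ t)).re t := by
    intro t ht
    have hγ' : HasDerivAt γ (b - a) t := (hasDerivAt_mul_const (b - a)).const_add a
    refine ((((hg _ (hγ t ht)).comp (t : ℂ) hγ').const_mul u).div_const
      (b - a)).real_of_complex.congr_deriv ?_
    rw [← mul_assoc, mul_div_cancel_right₀ _ hba]
  obtain ⟨t, ht, hzero⟩ := exists_hasDerivAt_eq_zero zero_lt_one
    (fun t ht => (hderiv t ht).continuousAt.continuousWithinAt)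
    (by simp [γ, hab]) (fun t ht => hderiv t (Ioo_subset_Icc_self ht))
  exact (hpos _ (hγ t (Ioo_subset_Icc_self ht))).ne' hzero

theorem exists_forall_re_mul_pos_of_re_nonneg {U : Set ℂ} {h : ℂ → ℂ} (hU : IsOpen U)
    (hUc : IsPreconnected U) (hh : DifferentiableOn ℂ h U) (hre : ∀ z ∈ U, 0 ≤ (h z).re)
    (hne : ∃ z ∈ U, h z ≠ 0) : ∃ u : ℂ, ∀ z ∈ U, 0 < (u * h z).re := by
  rcases (hh.analyticOnNhd hU).is_constant_or_isOpen hUc with ⟨c, hc⟩ | hopen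
  · obtain ⟨z, hz, hz0⟩ := hne
    refine ⟨c⁻¹, fun w hw => ?_⟩
    rw [hc w hw, inv_mul_cancel₀ (hc z hz ▸ hz0)]
    exact one_pos
  · refine ⟨1, fun z hz => ?_⟩
    have hsub : h '' U ⊆ interior {w : ℂ | 0 ≤ w.re} :=
      interior_maximal (image_subset_iff.mpr hre) (hopen U le_rfl hU)
    rw [interior_setOfPred_le_re] at hsub
    simpa using hsub (mem_image_of_mem h hz)

theorem norm_sub_one_lt_norm_add_one_iff {q : ℂ} : ‖q - 1‖ < ‖q + 1‖ ↔ 0 < q.re := by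
  rw [← sq_lt_sq₀ (norm_nonneg _) (norm_nonneg _), Complex.sq_norm, Complex.sq_norm, normSq_apply,
    normSq_apply]
  simp only [sub_re, sub_im, add_re, add_im, one_re, one_im]
  constructor <;> intro <;> nlinarith

theorem add_one_ne_zero_of_re_pos {q : ℂ} (hq : 0 < q.re) : q + 1 ≠ 0 :=
  norm_pos_iff.mp ((norm_nonneg _).trans_lt (norm_sub_one_lt_norm_add_one_iff.mpr hq))

theorem one_sub_sq_ne_zero_of_norm_lt_one {z : ℂ} (hz : ‖z‖ < 1) : 1 - z ^ 2 ≠ 0 := by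
  intro h
  have hz2 : ‖z ^ 2‖ < 1 := by
    rw [norm_pow]
    exact pow_lt_one₀ (norm_nonneg _) hz two_ne_zero
  simp [← sub_eq_zero.mp h] at hz2

/-- `tanh (ζ / 2)`: a conformal map of the strip `|Im ζ| < π / 2` onto the unit disc. -/
noncomputable def stripToDisc (ζ : ℂ) : ℂ := (exp ζ - 1) / (exp ζ + 1)

theorem convex_abs_im_lt (r : ℝ) : Convex ℝ {ζ : ℂ | |ζ.im| < r} := by
  convert (convex_halfSpace_im_gt (-r)).inter (convex_halfSpace_im_lt r) using 1
  ext
  simp [abs_lt]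

theorem exp_re_pos_of_abs_im_lt {ζ : ℂ} (hζ : |ζ.im| < π / 2) : 0 < (exp ζ).re := by
  rw [exp_re]
  exact mul_pos (Real.exp_pos _) (Real.cos_pos_of_mem_Ioo (abs_lt.mp hζ))

theorem exp_add_one_ne_zero_of_abs_im_lt {ζ : ℂ} (hζ : |ζ.im| < π / 2) : exp ζ + 1 ≠ 0 :=
  add_one_ne_zero_of_re_pos (exp_re_pos_of_abs_im_lt hζ)

theorem stripToDisc_mem_ball {ζ : ℂ} (hζ : |ζ.im| < π / 2) : stripToDisc ζ ∈ ball (0 : ℂ) 1 := by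
  rw [mem_ball_zero_iff, stripToDisc, norm_div,
    div_lt_one (norm_pos_iff.mpr (exp_add_one_ne_zero_of_abs_im_lt hζ))]
  exact norm_sub_one_lt_norm_add_one_iff.mpr (exp_re_pos_of_abs_im_lt hζ)

theorem hasDerivAt_stripToDisc {ζ : ℂ} (hζ : exp ζ + 1 ≠ 0) :
    HasDerivAt stripToDisc ((1 - stripToDisc ζ ^ 2) / 2) ζ := by
  refine (((hasDerivAt_exp ζ).sub_const 1).div ((hasDerivAt_exp ζ).add_const 1) hζ).congr_deriv ?_
  unfold stripToDisc
  field_simp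
  ring

theorem ball_subset_image_stripToDisc :
    ball (0 : ℂ) 1 ⊆ stripToDisc '' {ζ : ℂ | |ζ.im| < π / 2} := by
  intro z hz
  rw [mem_ball_zero_iff] at hz
  have h1z : 1 - z ≠ 0 := sub_ne_zero.mpr (by rintro rfl; simp at hz)
  set q := (1 + z) / (1 - z)
  have hq : 0 < q.re := by
    rw [← norm_sub_one_lt_norm_add_one_iff,
      show q - 1 = 2 * z / (1 - z) by simp only [q]; field_simp; ring,
      show q + 1 = 2 / (1 - z) by simp only [q]; field_simp; ring,
      norm_div, norm_div, div_lt_div_iff_of_pos_right (norm_pos_iff.mpr h1z), norm_mul]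
    simpa using hz
  have hq0 : q ≠ 0 := fun h => by simp [h] at hq
  refine ⟨log q, ?_, ?_⟩
  · rw [mem_ofPred_eq, log_im]
    exact abs_arg_lt_pi_div_two_iff.mpr (Or.inl hq)
  · rw [stripToDisc, exp_log hq0, div_eq_iff (add_one_ne_zero_of_re_pos hq)]
    simp only [q]
    field_simp
    ring

theorem stmt_6 (f : ℂ → ℂ) (hf : DifferentiableOn ℂ f (ball (0 : ℂ) 1))
    (hnc : ¬ ∃ c : ℂ, ∀ z ∈ ball (0 : ℂ) 1, f z = c)
    (hre : ∀ z ∈ ball (0 : ℂ) 1, 0 ≤ ((1 - z ^ 2) * deriv f z).re) :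
    Set.InjOn f (ball (0 : ℂ) 1) := by
  have hne : ∃ z ∈ ball (0 : ℂ) 1, (1 - z ^ 2) * deriv f z ≠ 0 := by
    by_contra! h0
    exact hnc (isOpen_ball.exists_is_const_of_deriv_eq_zero (convex_ball 0 1).isPreconnected hf
      fun z hz => (mul_eq_zero.mp (h0 z hz)).resolve_left
        (one_sub_sq_ne_zero_of_norm_lt_one (mem_ball_zero_iff.mp hz)))
  obtain ⟨u, hu⟩ := exists_forall_re_mul_pos_of_re_nonneg (h := fun z => (1 - z ^ 2) * deriv f z)
    isOpen_ball (convex_ball 0 1).isPreconnected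
    ((differentiableOn_const 1).sub (differentiableOn_pow 2) |>.mul
      (hf.analyticOnNhd isOpen_ball).deriv.differentiableOn)
    hre hne
  have hinj : InjOn (f ∘ stripToDisc) {ζ : ℂ | |ζ.im| < π / 2} := by
    refine (convex_abs_im_lt _).injOn_of_hasDerivAt_of_re_mul_pos
      (g' := fun ζ => deriv f (stripToDisc ζ) * ((1 - stripToDisc ζ ^ 2) / 2)) u
      (fun ζ hζ => ?_) fun ζ hζ => ?_
    · exact (hf.differentiableAt (isOpen_ball.mem_nhds (stripToDisc_mem_ball hζ))).hasDerivAt.comp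
        ζ (hasDerivAt_stripToDisc (exp_add_one_ne_zero_of_abs_im_lt hζ))
    · have := hu _ (stripToDisc_mem_ball hζ)
      rw [show u * (deriv f (stripToDisc ζ) * ((1 - stripToDisc ζ ^ 2) / 2)) =
        (u * ((1 - stripToDisc ζ ^ 2) * deriv f (stripToDisc ζ))) / 2 by ring, div_ofNat_re]
      positivity
  exact hinj.image_of_comp.mono ball_subset_image_stripToDisc
end

section
/- Let h, g be holomorphic on the open unit disk E and let f = h + conj(g) be locally univalent and sense-preserving (i.e., h' ≠ 0 and |g'/h'| < 1 on E). Fix γ ∈ [0,π). Then f is an injective harmonic map of E onto a domain convex in the direction e^{iγ} if and only if the holomorphic function h - e^{2iγ}g is injective on E and maps E onto a domain convex in the direction e^{iγ}. -/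
/-!
Put `Λ = e^{iγ}`. Since `Λ̄ (h + ḡ) - Λ̄ (h - Λ² g) = 2 Re (Λ g)` is real, `f = h + ḡ` and
`F = h - Λ² g` have the same imaginary part after rotation by `Λ̄`: they send each point of `E`
into the same line in the direction `Λ`. Let `u` be the one assumed injective with image convex
in the direction `Λ`, and `v` the other. Each line `c + ℝΛ` meets `u(E)` in an interval `T`, and
`t ↦ u⁻¹(c + tΛ)` is a smooth arc in `E` which `v` maps into the same line. The condition
`|g'| < |h'|` makes the position `Re (Λ̄ v)` along this arc strictly increasing in `t`. So `v` is
injective on each arc and maps it onto an interval of the line, and every point of `E` lies on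
such an arc.
-/

open Complex Metric

/-- A set `Ω ⊆ ℂ` is convex in the direction `e^{iγ}` if its intersection with every
line parallel to the line through `0` and `e^{iγ}` is connected (possibly empty). -/
def ConvexInDirection (γ : ℝ) (Ω : Set ℂ) : Prop :=
  ∀ c : ℂ, IsPreconnected (Ω ∩ {w : ℂ | ∃ t : ℝ, w = c + (t : ℂ) * Complex.exp (Complex.I * γ)})

open ComplexConjugate Topology Filter Function Set

section InverseFunction

variable {𝕜 E F : Type*} [NontriviallyNormedField 𝕜] [NormedAddCommGroup E] [NormedSpace 𝕜 E]
  [NormedAddCommGroup F] [NormedSpace 𝕜 F]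

theorem ContinuousLinearMap.exists_continuousLinearEquiv_eq [CompleteSpace 𝕜]
    [FiniteDimensional 𝕜 E] {T : E →L[𝕜] E} (hT : Injective T) :
    ∃ A : E ≃L[𝕜] E, (A : E →L[𝕜] E) = T :=
  ⟨(LinearEquiv.ofInjectiveEndo T.toLinearMap hT).toContinuousLinearEquiv, rfl⟩

variable [CompleteSpace E]

theorem IsOpen.image_of_hasStrictFDerivAt_equiv {f : E → F} {s : Set E} (hs : IsOpen s)
    (hf : ∀ x ∈ s, ∃ f' : E ≃L[𝕜] F, HasStrictFDerivAt f (f' : E →L[𝕜] F) x) :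
    IsOpen (f '' s) := by
  rw [isOpen_iff_mem_nhds]
  rintro _ ⟨x, hx, rfl⟩
  obtain ⟨f', hf'⟩ := hf x hx
  rw [← hf'.map_nhds_eq_of_equiv]
  exact image_mem_map (hs.mem_nhds hx)

theorem HasStrictFDerivAt.hasFDerivAt_invFunOn [CompleteSpace F] {f : E → F} {f' : E ≃L[𝕜] F}
    {s : Set E} {a : E} (hf : HasStrictFDerivAt f (f' : E →L[𝕜] F) a) (hs : s ∈ 𝓝 a)
    (hinj : InjOn f s) :
    HasFDerivAt (invFunOn f s) (f'.symm : F →L[𝕜] E) (f a) := by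
  have hmem : ∀ᶠ y in 𝓝 (f a), hf.localInverse f f' a y ∈ s :=
    hf.localInverse_continuousAt.preimage_mem_nhds (by rwa [hf.localInverse_apply_image])
  refine hf.to_localInverse.hasFDerivAt.congr_of_eventuallyEq ?_
  filter_upwards [hmem, hf.eventually_right_inverse] with y hy hfy
  calc invFunOn f s y = invFunOn f s (f (hf.localInverse f f' a y)) := by rw [hfy]
    _ = hf.localInverse f f' a y := hinj.leftInvOn_invFunOn hy

end InverseFunction

theorem add_ofReal_mul_eq_iff {Λ : ℂ} (hΛ : ‖Λ‖ = 1) (c w : ℂ) (t : ℝ) :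
    c + t * Λ = w ↔ t = (conj Λ * (w - c)).re ∧ (conj Λ * w).im = (conj Λ * c).im := by
  have hΛ' : conj Λ * Λ = 1 := by rw [conj_mul', hΛ]; norm_num
  have : c + t * Λ = w ↔ (t : ℂ) = conj Λ * (w - c) := by
    constructor
    · rintro rfl
      linear_combination (-t : ℂ) * hΛ'
    · intro ht
      linear_combination Λ * ht + (w - c) * hΛ'
  rw [this, Complex.ext_iff, ofReal_re, ofReal_im, mul_sub, sub_im, eq_comm (a := (0 : ℝ)),
    sub_eq_zero]

theorem convexInDirection_iff {γ : ℝ} {Ω : Set ℂ} :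
    ConvexInDirection γ Ω ↔
      ∀ c : ℂ, IsPreconnected ((fun t : ℝ => c + t * exp (I * γ)) ⁻¹' Ω) := by
  refine forall_congr' fun c => ?_
  have hL : Isometry fun t : ℝ => c + t * exp (I * γ) := Isometry.of_dist_eq fun s t => by
    simp only [dist_eq_norm, add_sub_add_left_eq_sub, ← sub_mul, norm_mul, norm_exp_I_mul_ofReal,
      mul_one, ← ofReal_sub, norm_real]
  rw [← hL.isEmbedding.isInducing.isPreconnected_image, image_preimage_eq_inter_range]
  congr! 2
  ext w
  simp [eq_comm]

section Wirtinger

/-- The general `ℝ`-linear endomorphism `w ↦ p w + q w̄` of `ℂ`, with Wirtinger derivatives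
`p` and `q`. -/
noncomputable def wirtingerCLM (p q : ℂ) : ℂ →L[ℝ] ℂ :=
  p • ContinuousLinearMap.id ℝ ℂ + q • conjCLE.toContinuousLinearMap

@[simp]
theorem wirtingerCLM_apply (p q w : ℂ) : wirtingerCLM p q w = p * w + q * conj w := by
  simp [wirtingerCLM]

theorem wirtingerCLM_injective {p q : ℂ} (hpq : ‖q‖ < ‖p‖) : Injective (wirtingerCLM p q) := by
  refine (injective_iff_map_eq_zero _).2 fun w hw => norm_eq_zero.1 ?_
  rw [wirtingerCLM_apply, add_eq_zero_iff_eq_neg] at hw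
  have : ‖p‖ * ‖w‖ = ‖q‖ * ‖w‖ := by
    simpa only [norm_mul, norm_neg, norm_conj] using congrArg norm hw
  by_contra hw0
  exact hpq.ne' (mul_right_cancel₀ hw0 this)

variable {φ ψ : ℂ → ℂ} {p q z : ℂ}

theorem HasStrictDerivAt.hasStrictFDerivAt_wirtingerCLM (hφ : HasStrictDerivAt φ p z) :
    HasStrictFDerivAt φ (wirtingerCLM p 0) z := by
  refine (hφ.hasStrictFDerivAt.restrictScalars ℝ).congr_fderiv ?_
  ext w
  simp [mul_comm]

theorem HasStrictDerivAt.add_conj (hφ : HasStrictDerivAt φ p z) (hψ : HasStrictDerivAt ψ q z) :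
    HasStrictFDerivAt (fun w => φ w + conj (ψ w)) (wirtingerCLM p (conj q)) z := by
  refine (hφ.hasStrictFDerivAt_wirtingerCLM.add
    (conjCLE.toContinuousLinearMap.hasStrictFDerivAt.comp z
      hψ.hasStrictFDerivAt_wirtingerCLM)).congr_fderiv ?_
  ext w
  simp

end Wirtinger

section Positivity

theorem re_add_mul_re_sub_pos {a b : ℂ} (hab : ‖b‖ < ‖a‖) (him : a.im = b.im) :
    0 < (a + b).re * (a - b).re := by
  have := sq_lt_sq' (by linarith [norm_nonneg b]) hab
  rw [Complex.sq_norm, Complex.sq_norm, normSq_apply, normSq_apply, him] at this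
  simp only [add_re, sub_re]
  nlinarith

theorem re_sub_pos_of_add_conj_eq_one {a b : ℂ} (hab : ‖b‖ < ‖a‖) (h : a + conj b = 1) :
    0 < (a - b).re := by
  have hre : (a + b).re = 1 := by simpa using congrArg re h
  have him : a.im = b.im := by
    have := congrArg im h
    simp only [add_im, conj_im, one_im] at this
    linarith
  simpa [hre] using re_add_mul_re_sub_pos hab him

theorem re_add_conj_pos_of_sub_eq_one {a b : ℂ} (hab : ‖b‖ < ‖a‖) (h : a - b = 1) :
    0 < (a + conj b).re := by
  have hre : (a - b).re = 1 := by simpa using congrArg re h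
  have him : a.im = b.im := by
    have := congrArg im h
    simp only [sub_im, one_im] at this
    linarith
  simpa [hre] using re_add_mul_re_sub_pos hab him

variable {Λ p q w : ℂ}

theorem wirtingerCLM_sub_sq_mul_injective (hΛ : ‖Λ‖ = 1) (hpq : ‖q‖ < ‖p‖) :
    Injective (wirtingerCLM (p - Λ ^ 2 * q) 0) := by
  refine wirtingerCLM_injective ?_
  rw [norm_zero, norm_pos_iff, sub_ne_zero]
  rintro rfl
  simp [hΛ] at hpq

theorem norm_mul_lt_norm_conj_mul (hΛ : ‖Λ‖ = 1) (hpq : ‖q‖ < ‖p‖) (hw : w ≠ 0) :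
    ‖Λ * (q * w)‖ < ‖conj Λ * (p * w)‖ := by
  simpa [hΛ] using mul_lt_mul_of_pos_right hpq (norm_pos_iff.2 hw)

theorem re_conj_mul_sub_sq_mul_pos (hΛ : ‖Λ‖ = 1) (hpq : ‖q‖ < ‖p‖)
    (hw : wirtingerCLM p (conj q) w = Λ) :
    0 < (conj Λ * wirtingerCLM (p - Λ ^ 2 * q) 0 w).re := by
  have hΛ' : conj Λ * Λ = 1 := by rw [conj_mul', hΛ]; norm_num
  have hw0 : w ≠ 0 := by
    rintro rfl
    rw [map_zero] at hw
    simp [← hw] at hΛ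
  rw [wirtingerCLM_apply] at hw
  have hsum : conj Λ * (p * w) + conj (Λ * (q * w)) = 1 := by
    simp only [map_mul]
    linear_combination conj Λ * hw + hΛ'
  convert re_sub_pos_of_add_conj_eq_one (norm_mul_lt_norm_conj_mul hΛ hpq hw0) hsum using 2
  simp only [wirtingerCLM_apply]
  linear_combination (-(Λ * q * w)) * hΛ'

theorem re_conj_mul_add_conj_pos (hΛ : ‖Λ‖ = 1) (hpq : ‖q‖ < ‖p‖)
    (hw : wirtingerCLM (p - Λ ^ 2 * q) 0 w = Λ) :
    0 < (conj Λ * wirtingerCLM p (conj q) w).re := by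
  have hΛ' : conj Λ * Λ = 1 := by rw [conj_mul', hΛ]; norm_num
  have hw0 : w ≠ 0 := by
    rintro rfl
    rw [map_zero] at hw
    simp [← hw] at hΛ
  rw [wirtingerCLM_apply] at hw
  have hdiff : conj Λ * (p * w) - Λ * (q * w) = 1 := by
    linear_combination conj Λ * hw + (Λ * q * w) * hΛ' + hΛ'
  convert re_add_conj_pos_of_sub_eq_one (norm_mul_lt_norm_conj_mul hΛ hpq hw0) hdiff using 2
  simp only [wirtingerCLM_apply, map_mul]
  ring

end Positivity

section Transfer

variable {U : Set ℂ} {u v : ℂ → ℂ} {u' v' : ℂ → ℂ →L[ℝ] ℂ} {Λ c : ℂ}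

theorem exists_hasDerivAt_invFunOn_line (hU : IsOpen U)
    (hu : ∀ z ∈ U, HasStrictFDerivAt u (u' z) z) (hu' : ∀ z ∈ U, Injective (u' z))
    (hinj : InjOn u U) {z : ℂ} (hz : z ∈ U) {t : ℝ} (ht : c + t * Λ = u z) :
    ∃ w, u' z w = Λ ∧ HasDerivAt (fun s : ℝ => invFunOn u U (c + s * Λ)) w t := by
  obtain ⟨A, hA⟩ := (u' z).exists_continuousLinearEquiv_eq (hu' z hz)
  have hinv := (hA ▸ hu z hz).hasFDerivAt_invFunOn (hU.mem_nhds hz) hinj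
  have hline : HasDerivAt (fun s : ℝ => c + s * Λ) Λ t := by
    simpa using ((hasDerivAt_id t).ofReal_comp.mul_const Λ).const_add c
  refine ⟨A.symm Λ, by rw [← hA]; exact A.apply_symm_apply Λ, ?_⟩
  rw [← ht] at hinv
  exact hinv.comp_hasDerivAt t hline

theorem exists_hasDerivAt_pos_along_line (hU : IsOpen U)
    (hu : ∀ z ∈ U, HasStrictFDerivAt u (u' z) z) (hu' : ∀ z ∈ U, Injective (u' z))
    (hinj : InjOn u U) (hv : ∀ z ∈ U, HasFDerivAt v (v' z) z)
    (hpos : ∀ z ∈ U, ∀ w, u' z w = Λ → 0 < (conj Λ * v' z w).re) :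
    ∀ t ∈ (fun t : ℝ => c + t * Λ) ⁻¹' (u '' U), ∃ d, 0 < d ∧
      HasDerivAt (fun s : ℝ => (conj Λ * v (invFunOn u U (c + s * Λ))).re) d t := by
  rintro t ⟨z, hz, hzt : u z = c + t * Λ⟩
  obtain ⟨w, hw, hd⟩ := exists_hasDerivAt_invFunOn_line hU hu hu' hinj hz hzt.symm
  have hψ : invFunOn u U (c + t * Λ) = z := by
    rw [← hzt]
    exact hinj.leftInvOn_invFunOn hz
  refine ⟨_, hpos z hz w hw, ?_⟩
  have hvz : HasFDerivAt v (v' z) (invFunOn u U (c + t * Λ)) := by rw [hψ]; exact hv z hz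
  simpa only [Function.comp_def, reCLM_apply] using reCLM.hasFDerivAt.comp_hasDerivAt t
    ((hvz.comp_hasDerivAt t hd).const_mul (conj Λ))

theorem strictMonoOn_along_line (hU : IsOpen U)
    (hu : ∀ z ∈ U, HasStrictFDerivAt u (u' z) z) (hu' : ∀ z ∈ U, Injective (u' z))
    (hinj : InjOn u U) (hv : ∀ z ∈ U, HasFDerivAt v (v' z) z)
    (hpos : ∀ z ∈ U, ∀ w, u' z w = Λ → 0 < (conj Λ * v' z w).re)
    (hT : IsPreconnected ((fun t : ℝ => c + t * Λ) ⁻¹' (u '' U))) :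
    StrictMonoOn (fun s : ℝ => (conj Λ * v (invFunOn u U (c + s * Λ))).re)
      ((fun t : ℝ => c + t * Λ) ⁻¹' (u '' U)) := by
  have hd := exists_hasDerivAt_pos_along_line (c := c) hU hu hu' hinj hv hpos
  have hopen : IsOpen ((fun t : ℝ => c + t * Λ) ⁻¹' (u '' U)) := by
    refine (hU.image_of_hasStrictFDerivAt_equiv (𝕜 := ℝ) fun z hz => ?_).preimage (by fun_prop)
    obtain ⟨A, hA⟩ := (u' z).exists_continuousLinearEquiv_eq (hu' z hz)
    exact ⟨A, hA ▸ hu z hz⟩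
  refine strictMonoOn_of_deriv_pos (isPreconnected_iff_ordConnected.1 hT).convex
    (fun t ht => ?_) fun t ht => ?_
  · obtain ⟨d, -, hd⟩ := hd t ht
    exact hd.continuousAt.continuousWithinAt
  · rw [hopen.interior_eq] at ht
    obtain ⟨d, hd0, hd⟩ := hd t ht
    rwa [hd.deriv]

theorem injOn_of_im_eq (hΛ : ‖Λ‖ = 1) (hU : IsOpen U)
    (hu : ∀ z ∈ U, HasStrictFDerivAt u (u' z) z) (hu' : ∀ z ∈ U, Injective (u' z))
    (hinj : InjOn u U) (hv : ∀ z ∈ U, HasFDerivAt v (v' z) z)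
    (hpos : ∀ z ∈ U, ∀ w, u' z w = Λ → 0 < (conj Λ * v' z w).re)
    (him : ∀ z ∈ U, (conj Λ * v z).im = (conj Λ * u z).im)
    (hT : ∀ c, IsPreconnected ((fun t : ℝ => c + t * Λ) ⁻¹' (u '' U))) :
    InjOn v U := by
  intro z₁ hz₁ z₂ hz₂ hv₁₂
  set t := (conj Λ * (u z₂ - u z₁)).re
  have h₀ : u z₁ + ((0 : ℝ) : ℂ) * Λ = u z₁ := by simp
  have hₜ : u z₁ + t * Λ = u z₂ :=
    (add_ofReal_mul_eq_iff hΛ _ _ _).2 ⟨rfl, by rw [← him z₁ hz₁, ← him z₂ hz₂, hv₁₂]⟩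
  have hψ₀ : invFunOn u U (u z₁ + ((0 : ℝ) : ℂ) * Λ) = z₁ := by
    rw [h₀]; exact hinj.leftInvOn_invFunOn hz₁
  have hψₜ : invFunOn u U (u z₁ + t * Λ) = z₂ := by
    rw [hₜ]; exact hinj.leftInvOn_invFunOn hz₂
  have ht₀ : (0 : ℝ) = t :=
    (strictMonoOn_along_line hU hu hu' hinj hv hpos (hT (u z₁))).injOn
      (show u z₁ + ((0 : ℝ) : ℂ) * Λ ∈ u '' U by rw [h₀]; exact mem_image_of_mem u hz₁)
      (show u z₁ + t * Λ ∈ u '' U by rw [hₜ]; exact mem_image_of_mem u hz₂)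
      (by simp only [hψ₀, hψₜ, hv₁₂])
  rw [← hψ₀, ← hψₜ, ht₀]

theorem isPreconnected_preimage_of_im_eq (hΛ : ‖Λ‖ = 1) (hU : IsOpen U)
    (hu : ∀ z ∈ U, HasStrictFDerivAt u (u' z) z) (hu' : ∀ z ∈ U, Injective (u' z))
    (hinj : InjOn u U) (hv : ∀ z ∈ U, HasFDerivAt v (v' z) z)
    (hpos : ∀ z ∈ U, ∀ w, u' z w = Λ → 0 < (conj Λ * v' z w).re)
    (him : ∀ z ∈ U, (conj Λ * v z).im = (conj Λ * u z).im)
    (hT : IsPreconnected ((fun t : ℝ => c + t * Λ) ⁻¹' (u '' U))) :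
    IsPreconnected ((fun t : ℝ => c + t * Λ) ⁻¹' (v '' U)) := by
  have hψ : ∀ z ∈ U, ∀ t : ℝ, c + t * Λ = u z → invFunOn u U (c + t * Λ) = z :=
    fun z hz t ht => by rw [ht]; exact hinj.leftInvOn_invFunOn hz
  have heq : (fun t : ℝ => c + t * Λ) ⁻¹' (v '' U) =
      (fun t : ℝ => (conj Λ * v (invFunOn u U (c + t * Λ))).re - (conj Λ * c).re) ''
        ((fun t : ℝ => c + t * Λ) ⁻¹' (u '' U)) := by
    ext s
    constructor
    · rintro ⟨z, hz, hzs : v z = c + s * Λ⟩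
      obtain ⟨hs, hvc⟩ := (add_ofReal_mul_eq_iff hΛ c (v z) s).1 hzs.symm
      have hut : c + ((conj Λ * (u z - c)).re : ℝ) * Λ = u z :=
        (add_ofReal_mul_eq_iff hΛ _ _ _).2 ⟨rfl, by rw [← him z hz, hvc]⟩
      refine ⟨_, ⟨z, hz, hut.symm⟩, ?_⟩
      simp only
      rw [hψ z hz _ hut, hs, mul_sub, sub_re]
    · rintro ⟨t, ⟨z, hz, hzt : u z = c + t * Λ⟩, rfl⟩
      obtain ⟨-, huc⟩ := (add_ofReal_mul_eq_iff hΛ c (u z) t).1 hzt.symm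
      refine ⟨z, hz, ((add_ofReal_mul_eq_iff hΛ _ _ _).2 ⟨?_, by rw [him z hz, huc]⟩).symm⟩
      simp only
      rw [hψ z hz t hzt.symm, mul_sub, sub_re]
  rw [heq]
  refine hT.image _ fun t ht => ?_
  obtain ⟨d, -, hd⟩ := exists_hasDerivAt_pos_along_line hU hu hu' hinj hv hpos t ht
  exact (hd.continuousAt.sub continuousAt_const).continuousWithinAt

theorem ConvexInDirection.image_of_im_eq {γ : ℝ} (hU : IsOpen U)
    (hu : ∀ z ∈ U, HasStrictFDerivAt u (u' z) z) (hu' : ∀ z ∈ U, Injective (u' z))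
    (hv : ∀ z ∈ U, HasFDerivAt v (v' z) z)
    (hpos : ∀ z ∈ U, ∀ w, u' z w = exp (I * γ) → 0 < (conj (exp (I * γ)) * v' z w).re)
    (him : ∀ z ∈ U, (conj (exp (I * γ)) * v z).im = (conj (exp (I * γ)) * u z).im)
    (hinj : InjOn u U) (hconv : ConvexInDirection γ (u '' U)) :
    InjOn v U ∧ ConvexInDirection γ (v '' U) := by
  have hΛ : ‖exp (I * γ)‖ = 1 := norm_exp_I_mul_ofReal γ
  rw [convexInDirection_iff] at hconv ⊢
  exact ⟨injOn_of_im_eq hΛ hU hu hu' hinj hv hpos him hconv,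
    fun c => isPreconnected_preimage_of_im_eq hΛ hU hu hu' hinj hv hpos him (hconv c)⟩

end Transfer

theorem im_conj_mul_sub_sq_mul {Λ : ℂ} (hΛ : ‖Λ‖ = 1) (x y : ℂ) :
    (conj Λ * (x - Λ ^ 2 * y)).im = (conj Λ * (x + conj y)).im := by
  have hΛ' : conj Λ * Λ = 1 := by rw [conj_mul', hΛ]; norm_num
  have : conj Λ * (x + conj y) = conj Λ * (x - Λ ^ 2 * y) + (Λ * y + conj (Λ * y)) := by
    rw [map_mul]
    linear_combination (Λ * y) * hΛ'
  rw [this, add_im, add_conj, ofReal_im, add_zero]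

theorem stmt_8_general (h g : ℂ → ℂ)
    (hh : DifferentiableOn ℂ h (ball (0 : ℂ) 1))
    (hg : DifferentiableOn ℂ g (ball (0 : ℂ) 1))
    (hlu : ∀ z ∈ ball (0 : ℂ) 1, deriv h z ≠ 0 ∧ ‖deriv g z / deriv h z‖ < 1)
    (γ : ℝ) :
    (Set.InjOn (fun z => h z + (starRingEnd ℂ) (g z)) (ball (0 : ℂ) 1) ∧
      ConvexInDirection γ ((fun z => h z + (starRingEnd ℂ) (g z)) '' ball (0 : ℂ) 1)) ↔
    (Set.InjOn (fun z => h z - Complex.exp (2 * Complex.I * γ) * g z) (ball (0 : ℂ) 1) ∧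
      ConvexInDirection γ
        ((fun z => h z - Complex.exp (2 * Complex.I * γ) * g z) '' ball (0 : ℂ) 1)) := by
  set Λ := exp (I * γ)
  have hΛ : ‖Λ‖ = 1 := norm_exp_I_mul_ofReal γ
  have hΛ2 : exp (2 * I * γ) = Λ ^ 2 := by rw [← exp_nat_mul]; ring_nf
  rw [hΛ2]
  have hh' : ∀ z ∈ ball (0 : ℂ) 1, HasStrictDerivAt h (deriv h z) z :=
    fun z hz => (hh.analyticAt (isOpen_ball.mem_nhds hz)).hasStrictDerivAt
  have hg' : ∀ z ∈ ball (0 : ℂ) 1, HasStrictDerivAt g (deriv g z) z :=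
    fun z hz => (hg.analyticAt (isOpen_ball.mem_nhds hz)).hasStrictDerivAt
  have hlt : ∀ z ∈ ball (0 : ℂ) 1, ‖deriv g z‖ < ‖deriv h z‖ := fun z hz => by
    have ⟨h0, h1⟩ := hlu z hz
    rwa [norm_div, div_lt_one (norm_pos_iff.2 h0)] at h1
  have hf := fun z hz => (hh' z hz).add_conj (hg' z hz)
  have hF := fun z hz =>
    ((hh' z hz).sub ((hg' z hz).const_mul (Λ ^ 2))).hasStrictFDerivAt_wirtingerCLM
  have hf' : ∀ z ∈ ball (0 : ℂ) 1, Injective (wirtingerCLM (deriv h z) (conj (deriv g z))) :=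
    fun z hz => wirtingerCLM_injective (by simpa using hlt z hz)
  have hF' : ∀ z ∈ ball (0 : ℂ) 1, Injective (wirtingerCLM (deriv h z - Λ ^ 2 * deriv g z) 0) :=
    fun z hz => wirtingerCLM_sub_sq_mul_injective hΛ (hlt z hz)
  have him := fun z (_ : z ∈ ball (0 : ℂ) 1) => im_conj_mul_sub_sq_mul hΛ (h z) (g z)
  constructor
  · rintro ⟨hinj, hconv⟩
    exact hconv.image_of_im_eq isOpen_ball hf hf' (fun z hz => (hF z hz).hasFDerivAt)
      (fun z hz w hw => re_conj_mul_sub_sq_mul_pos hΛ (hlt z hz) hw) him hinj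
  · rintro ⟨hinj, hconv⟩
    exact hconv.image_of_im_eq isOpen_ball hF hF' (fun z hz => (hf z hz).hasFDerivAt)
      (fun z hz w hw => re_conj_mul_add_conj_pos hΛ (hlt z hz) hw)
      (fun z hz => (him z hz).symm) hinj

theorem stmt_8 (h g : ℂ → ℂ)
    (hh : DifferentiableOn ℂ h (ball (0 : ℂ) 1))
    (hg : DifferentiableOn ℂ g (ball (0 : ℂ) 1))
    (hlu : ∀ z ∈ ball (0 : ℂ) 1, deriv h z ≠ 0 ∧ ‖deriv g z / deriv h z‖ < 1)
    (γ : ℝ) (hγ : γ ∈ Set.Ico 0 Real.pi) :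
    (Set.InjOn (fun z => h z + (starRingEnd ℂ) (g z)) (ball (0 : ℂ) 1) ∧
      ConvexInDirection γ ((fun z => h z + (starRingEnd ℂ) (g z)) '' ball (0 : ℂ) 1)) ↔
    (Set.InjOn (fun z => h z - Complex.exp (2 * Complex.I * γ) * g z) (ball (0 : ℂ) 1) ∧
      ConvexInDirection γ
        ((fun z => h z - Complex.exp (2 * Complex.I * γ) * g z) '' ball (0 : ℂ) 1)) :=
  stmt_8_general h g hh hg hlu γ
end
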